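/- arXiv:1403.0241 — 4 statements merged into one kernel-verified Lean document; each statement's English description precedes it below -/
import Mathlib

section
/- Gordan's theorem of alternatives: For every real n×m matrix A, exactly one of the following holds: (a) there exists a nonzero vector z in the nonnegative orthant of R^m with Az = 0, or (b) there exists y in R^n such that every entry of A^T y is strictly positive. -/
/-!
Either `0` lies in the convex hull of the columns of `A`, and the convex weights give `z`, or a
hyperplane strictly separates `0` from that hull, and its normal gives `y`. Both cannot hold,
since then `0 = y ⬝ᵥ A *ᵥ z = Aᵀ *ᵥ y ⬝ᵥ z > 0`.
-/

open Matrix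

variable {ι κ R : Type*} [Fintype κ]

theorem Matrix.dotProduct_pos_of_pos_of_nonneg_of_ne_zero [Ring R] [PartialOrder R]
    [IsStrictOrderedRing R] {x z : κ → R} (hx : ∀ j, 0 < x j) (hz : ∀ j, 0 ≤ z j)
    (hz0 : z ≠ 0) : 0 < x ⬝ᵥ z := by
  obtain ⟨j, hj⟩ := Function.ne_iff.mp hz0
  exact Finset.sum_pos' (fun i _ => mul_nonneg (hx i).le (hz i))
    ⟨j, Finset.mem_univ j, mul_pos (hx j) ((hz j).lt_of_ne' hj)⟩

theorem Matrix.not_forall_pos_transpose_mulVec [Fintype ι] [CommRing R] [PartialOrder R]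
    [IsStrictOrderedRing R] {A : Matrix ι κ R} {z : κ → R} (hz : ∀ j, 0 ≤ z j)
    (hz0 : z ≠ 0) (hAz : A *ᵥ z = 0) (y : ι → R) : ¬ ∀ j, 0 < (Aᵀ *ᵥ y) j := by
  intro hy
  have := dotProduct_pos_of_pos_of_nonneg_of_ne_zero hy hz hz0
  rwa [mulVec_transpose, ← dotProduct_mulVec, hAz, dotProduct_zero, lt_self_iff_false] at this

theorem Matrix.exists_nonneg_ne_zero_mulVec_eq_zero_of_zero_mem_convexHull [Field R]
    [LinearOrder R] [IsStrictOrderedRing R] {A : Matrix ι κ R}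
    (h : 0 ∈ convexHull R (Set.range A.col)) :
    ∃ z, z ≠ 0 ∧ (∀ j, 0 ≤ z j) ∧ A *ᵥ z = 0 := by
  classical
  rw [convexHull_range_eq_exists_affineCombination] at h
  obtain ⟨s, w, hw0, hw1, hwA⟩ := h
  rw [Finset.affineCombination_eq_linear_combination s _ w hw1] at hwA
  set z : κ → R := fun j => if j ∈ s then w j else 0
  have hz_sum : ∑ j, z j = 1 := by simp [z, Finset.sum_ite_mem, hw1]
  refine ⟨z, fun hz => by simp [hz] at hz_sum, fun j => ?_, ?_⟩
  · by_cases hj : j ∈ s <;> simp [z, hj, hw0]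
  · rw [mulVec_eq_sum, ← hwA]
    simp [z, ite_smul, Finset.sum_ite_mem, col_def]

theorem Matrix.exists_forall_pos_transpose_mulVec_of_zero_notMem_convexHull [Fintype ι]
    {A : Matrix ι κ ℝ} (h : 0 ∉ convexHull ℝ (Set.range A.col)) :
    ∃ y, ∀ j, 0 < (Aᵀ *ᵥ y) j := by
  classical
  obtain ⟨f, u, hf, hu⟩ := geometric_hahn_banach_closed_point (convex_convexHull ℝ _)
    ((Set.finite_range _).isClosed_convexHull ℝ) h
  set v := (dotProductEquiv ℝ ι).symm f.toLinearMap
  have hfv (x : ι → ℝ) : f x = v ⬝ᵥ x := by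
    rw [← dotProductEquiv_apply_apply, LinearEquiv.apply_symm_apply]; rfl
  refine ⟨-v, fun j => ?_⟩
  have hfj : f (A.col j) < 0 :=
    (hf _ (subset_convexHull ℝ _ ⟨j, rfl⟩)).trans (by simpa using hu)
  rw [mulVec_neg, Pi.neg_apply, neg_pos]
  change A.col j ⬝ᵥ v < 0
  rwa [dotProduct_comm, ← hfv]

/-- Gordan's theorem of alternatives. -/
theorem gordan_alternative (n m : ℕ) (A : Matrix (Fin n) (Fin m) ℝ) :
    Xor'
      (∃ z : Fin m → ℝ, z ≠ 0 ∧ (∀ i, 0 ≤ z i) ∧ A.mulVec z = 0)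
      (∃ y : Fin n → ℝ, ∀ j, 0 < Aᵀ.mulVec y j) := by
  by_cases h : 0 ∈ convexHull ℝ (Set.range A.col)
  · obtain ⟨z, hz0, hz, hAz⟩ := exists_nonneg_ne_zero_mulVec_eq_zero_of_zero_mem_convexHull h
    exact Or.inl ⟨⟨z, hz0, hz, hAz⟩,
      fun ⟨y, hy⟩ => not_forall_pos_transpose_mulVec hz hz0 hAz y hy⟩
  · obtain ⟨y, hy⟩ := exists_forall_pos_transpose_mulVec_of_zero_notMem_convexHull h
    exact Or.inr ⟨⟨y, hy⟩,
      fun ⟨z, hz0, hz, hAz⟩ => not_forall_pos_transpose_mulVec hz hz0 hAz y hy⟩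
end

section
/- Let B ∈ R^{r×n} and K ⊆ R^n a subset. The generalized monomial map φ_B : R^n_{>0} → R^r_{>0}, φ_B(x) = x^B (with (x^B)_j = Π_i x_i^{B_{ji}}), is injective with respect to K (i.e., φ_B(x) = φ_B(y) and x - y ∈ K imply x = y) if and only if σ(ker(B)) ∩ σ(K \ {0}) = ∅. -/
open Matrix

/-!
On the positive orthant `log` turns `x^B = y^B` into `B (log x - log y) = 0`, and since `log` is
increasing, `log x - log y` has the sign pattern of `x - y`. Conversely, a kernel vector `k` and
`u ∈ K \ {0}` with equal sign patterns are realized coordinatewise as `k = log x - log y`,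
`u = x - y` by `y i = u i / (exp (k i) - 1)` and `x i = y i * exp (k i)`.
-/

/-- The generalized monomial map `x ↦ x^B`. -/
noncomputable def monomialMap {r n : ℕ} (B : Matrix (Fin r) (Fin n) ℝ)
    (x : Fin n → ℝ) : Fin r → ℝ :=
  fun j => ∏ i, x i ^ B j i

theorem StrictMonoOn.sign_sub {f : ℝ → ℝ} {s : Set ℝ} (hf : StrictMonoOn f s) {x y : ℝ}
    (hx : x ∈ s) (hy : y ∈ s) : Real.sign (f x - f y) = Real.sign (x - y) := by
  rcases lt_trichotomy x y with h | rfl | h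
  · rw [Real.sign_of_neg (sub_neg.2 (hf hx hy h)), Real.sign_of_neg (sub_neg.2 h)]
  · simp
  · rw [Real.sign_of_pos (sub_pos.2 (hf hy hx h)), Real.sign_of_pos (sub_pos.2 h)]

theorem Real.sign_exp_sub_one (k : ℝ) : Real.sign (Real.exp k - 1) = Real.sign k := by
  simpa [Real.exp_zero] using
    (Real.exp_strictMono.strictMonoOn Set.univ).sign_sub (Set.mem_univ k) (Set.mem_univ 0)

theorem div_pos_of_sign_eq {a b : ℝ} (h : Real.sign a = Real.sign b) (hb : b ≠ 0) :
    0 < a / b := by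
  rw [div_pos_iff]
  unfold Real.sign at h
  split_ifs at h <;> grind

theorem exists_pos_sub_eq_and_log_sub_eq {k u : ℝ} (h : Real.sign k = Real.sign u) :
    ∃ x y : ℝ, 0 < x ∧ 0 < y ∧ x - y = u ∧ Real.log x - Real.log y = k := by
  by_cases hk : k = 0
  · subst hk
    have hu : u = 0 := Real.sign_eq_zero_iff.1 (by rw [← h, Real.sign_zero])
    exact ⟨1, 1, one_pos, one_pos, by simp [hu], by simp⟩
  have he : Real.exp k - 1 ≠ 0 := by
    rw [sub_ne_zero, Ne, Real.exp_eq_one_iff]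
    exact hk
  have hy : 0 < u / (Real.exp k - 1) :=
    div_pos_of_sign_eq (by rw [Real.sign_exp_sub_one, h]) he
  refine ⟨u / (Real.exp k - 1) * Real.exp k, u / (Real.exp k - 1),
    mul_pos hy (Real.exp_pos k), hy, ?_, ?_⟩
  · field_simp
  · rw [Real.log_mul hy.ne' (Real.exp_pos k).ne', Real.log_exp]
    ring

lemma monomialMap_apply_of_pos {r n : ℕ} (B : Matrix (Fin r) (Fin n) ℝ)
    {x : Fin n → ℝ} (hx : ∀ i, 0 < x i) (j : Fin r) :
    monomialMap B x j = Real.exp (∑ i, B j i * Real.log (x i)) := by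
  rw [monomialMap, Real.exp_sum]
  refine Finset.prod_congr rfl fun i _ => ?_
  rw [Real.rpow_def_of_pos (hx i), mul_comm]

lemma monomialMap_eq_iff {r n : ℕ} (B : Matrix (Fin r) (Fin n) ℝ)
    {x y : Fin n → ℝ} (hx : ∀ i, 0 < x i) (hy : ∀ i, 0 < y i) :
    monomialMap B x = monomialMap B y ↔
      B *ᵥ (fun i => Real.log (x i) - Real.log (y i)) = 0 := by
  rw [funext_iff, funext_iff]
  refine forall_congr' fun j => ?_
  rw [monomialMap_apply_of_pos B hx j, monomialMap_apply_of_pos B hy j, Real.exp_eq_exp]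
  simp only [mulVec, dotProduct, Pi.zero_apply, mul_sub, Finset.sum_sub_distrib, sub_eq_zero]

/-- `φ_B` is injective with respect to `K` iff `σ(ker B) ∩ σ(K \ {0}) = ∅`. -/
theorem monomialMap_injective_iff (r n : ℕ) (B : Matrix (Fin r) (Fin n) ℝ)
    (K : Set (Fin n → ℝ)) :
    (∀ x y : Fin n → ℝ, (∀ i, 0 < x i) → (∀ i, 0 < y i) →
        monomialMap B x = monomialMap B y → x - y ∈ K → x = y) ↔
      ¬ ∃ k : Fin n → ℝ, B.mulVec k = 0 ∧ ∃ u ∈ K, u ≠ 0 ∧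
        (∀ i, Real.sign (k i) = Real.sign (u i)) := by
  constructor
  · rintro H ⟨k, hk, u, huK, hu0, hs⟩
    choose x y hx hy hsub hlog using fun i => exists_pos_sub_eq_and_log_sub_eq (hs i)
    have hxy : x - y = u := funext hsub
    have hmono : monomialMap B x = monomialMap B y := by
      rw [monomialMap_eq_iff B hx hy, funext hlog]
      exact hk
    exact hu0 (by rw [← hxy, H x y hx hy hmono (hxy ▸ huK), sub_self])
  · intro H x y hx hy hmono hK
    by_contra hne
    exact H ⟨_, (monomialMap_eq_iff B hx hy).1 hmono, x - y, hK, sub_ne_zero.2 hne,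
      fun i => Real.strictMonoOn_log.sign_sub (hx i) (hy i)⟩
end

section
/- Reformulation of Gordan's alternative for reversible reaction systems: for every matrix Â ∈ R^{n×r} and every ν ∈ R^r, exactly one of the following holds: (a) there exists nonzero ẑ ∈ R^r with sign(ẑ_i) ∈ {sign(ν_i), 0} for all i and Â ẑ = 0; (b) there exists γ ∈ R^n such that for each i, either sign((Â^T γ)_i) = −sign(ν_i) or ν_i = 0. -/
/-!
Only the reactions with `ν i ≠ 0` matter, and after multiplying column `i` of `A` by `sign (ν i)`
both alternatives become the two sides of Gordan's theorem for the vectors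
`b i = sign (ν i) • Aᵀ i`: either a nontrivial nonnegative combination of them vanishes (giving
`z i = sign (ν i) * w i`), or some `y` has `0 < y ⬝ᵥ b i` for every such `i` (giving `γ = -y`).
Gordan's theorem itself follows by separating `0` from the compact convex hull of the `b i`;
the two sides exclude each other because a functional positive on every `b i` is positive on any
nontrivial nonnegative combination of them.
-/

open Matrix

section Gordan

variable {ι E : Type*} [AddCommGroup E] [Module ℝ E]

theorem sum_smul_ne_zero_of_forall_pos [Fintype ι] (f : E →ₗ[ℝ] ℝ) {b : ι → E} {w : ι → ℝ}
    (hw₀ : 0 ≤ w) (hw : w ≠ 0) (hf : ∀ i, 0 < f (b i)) : ∑ i, w i • b i ≠ 0 := by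
  obtain ⟨i, hi⟩ := Function.ne_iff.mp hw
  have hpos : 0 < f (∑ i, w i • b i) := by
    simp only [map_sum, map_smul, smul_eq_mul]
    exact Finset.sum_pos' (fun j _ ↦ mul_nonneg (hw₀ j) (hf j).le)
      ⟨i, Finset.mem_univ i, mul_pos ((hw₀ i).lt_of_ne' hi) (hf i)⟩
  rintro hsum
  simp [hsum] at hpos

variable [TopologicalSpace E] [IsTopologicalAddGroup E] [ContinuousSMul ℝ E]
  [LocallyConvexSpace ℝ E] [T2Space E]

theorem gordan_alternative_s11 [Fintype ι] (b : ι → E) :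
    Xor (∃ w : ι → ℝ, 0 ≤ w ∧ w ≠ 0 ∧ ∑ i, w i • b i = 0)
      (∃ f : StrongDual ℝ E, ∀ i, 0 < f (b i)) := by
  classical
  rw [xor_iff_or_and_not_and]
  refine ⟨?_, fun ⟨⟨w, hw₀, hw, hsum⟩, f, hf⟩ ↦ sum_smul_ne_zero_of_forall_pos f hw₀ hw hf hsum⟩
  let L := Fintype.linearCombination ℝ b
  have hL : ∀ w, L w = ∑ i, w i • b i := Fintype.linearCombination_apply ℝ b
  by_cases h₀ : (0 : E) ∈ L '' stdSimplex ℝ ι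
  · obtain ⟨w, ⟨hw₀, hw₁⟩, hw⟩ := h₀
    refine .inl ⟨w, hw₀, ?_, (hL w).symm.trans hw⟩
    rintro rfl
    simp at hw₁
  · have hclosed : IsClosed (L '' stdSimplex ℝ ι) :=
      ((isCompact_stdSimplex ℝ ι).image L.continuous_of_finiteDimensional).isClosed
    obtain ⟨f, u, hu, hf⟩ :=
      geometric_hahn_banach_point_closed ((convex_stdSimplex ℝ ι).linear_image L) hclosed h₀
    refine .inr ⟨f, fun i ↦ (map_zero f ▸ hu).trans (hf _ ⟨_, single_mem_stdSimplex ℝ i, ?_⟩)⟩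
    simp [hL, Pi.single_apply]

theorem Finset.gordan_alternative (s : Finset ι) (b : ι → E) :
    Xor (∃ w : ι → ℝ, (∀ i ∈ s, 0 ≤ w i) ∧ (∃ i ∈ s, w i ≠ 0) ∧ ∑ i ∈ s, w i • b i = 0)
      (∃ f : StrongDual ℝ E, ∀ i ∈ s, 0 < f (b i)) := by
  classical
  convert _root_.gordan_alternative_s11 (fun i : s ↦ b i) using 1
  · constructor
    · rintro ⟨w, hw₀, ⟨i, hi, hwi⟩, hsum⟩
      refine ⟨fun i ↦ w i, fun i ↦ hw₀ i i.2, fun h ↦ hwi (congrFun h ⟨i, hi⟩), ?_⟩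
      rwa [Finset.sum_coe_sort s fun i ↦ w i • b i]
    · rintro ⟨w, hw₀, hw, hsum⟩
      obtain ⟨i, hi⟩ := Function.ne_iff.mp hw
      refine ⟨fun j ↦ if h : j ∈ s then w ⟨j, h⟩ else 0, fun j hj ↦ by simpa [hj] using hw₀ _,
        ⟨i, i.2, by simpa using hi⟩, ?_⟩
      rw [← Finset.sum_coe_sort]
      simpa using hsum
  · simp

end Gordan

theorem exists_strongDual_pi_iff {m : Type*} [Fintype m] [DecidableEq m]
    (p : ((m → ℝ) → ℝ) → Prop) :
    (∃ f : StrongDual ℝ (m → ℝ), p f) ↔ ∃ y : m → ℝ, p (y ⬝ᵥ ·) := by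
  constructor
  · rintro ⟨f, hf⟩
    refine ⟨(dotProductEquiv ℝ m).symm f.toLinearMap, ?_⟩
    convert hf using 2 with x
    exact LinearMap.congr_fun ((dotProductEquiv ℝ m).apply_symm_apply f.toLinearMap) x
  · rintro ⟨y, hy⟩
    exact ⟨LinearMap.toContinuousLinearMap (dotProductEquiv ℝ m y), hy⟩

theorem Finset.gordan_alternative_dotProduct {ι m : Type*} [Fintype m] [DecidableEq m]
    (s : Finset ι) (b : ι → m → ℝ) :
    Xor (∃ w : ι → ℝ, (∀ i ∈ s, 0 ≤ w i) ∧ (∃ i ∈ s, w i ≠ 0) ∧ ∑ i ∈ s, w i • b i = 0)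
      (∃ y : m → ℝ, ∀ i ∈ s, 0 < y ⬝ᵥ b i) := by
  simpa only [exists_strongDual_pi_iff fun f ↦ ∀ i ∈ s, 0 < f (b i)] using s.gordan_alternative b

namespace Real

theorem sign_eq_or_sign_eq_zero_iff {x t : ℝ} :
    sign x = sign t ∨ sign x = 0 ↔ x = sign t * |x| := by
  rcases lt_trichotomy x 0 with _ | rfl | _ <;> rcases lt_trichotomy t 0 with _ | rfl | _ <;>
    grind [sign_of_neg, sign_of_pos, sign_zero]

theorem sign_neg_eq_neg_sign_iff {x t : ℝ} (ht : t ≠ 0) :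
    sign (-x) = -sign t ↔ 0 < sign t * x := by
  rcases sign_apply_eq_of_ne_zero t ht with h | h <;> rw [h] <;>
    rcases lt_trichotomy x 0 with _ | rfl | _ <;> grind [sign_of_neg, sign_of_pos, sign_zero]

end Real

section Flux

variable {m ι : Type*} [Fintype ι] (A : Matrix m ι ℝ) (ν : ι → ℝ)

theorem mulVec_sign_mul_eq_sum (w : ι → ℝ) :
    A *ᵥ (fun i ↦ Real.sign (ν i) * w i) =
      ∑ i ∈ {i | ν i ≠ 0}, w i • Real.sign (ν i) • Aᵀ i := by
  rw [Finset.sum_filter_of_ne fun i _ h ↦ by contrapose! h; simp [h]]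
  ext j
  simp [mulVec, dotProduct, Finset.sum_apply, mul_comm, mul_left_comm]

theorem exists_signCompatible_mem_ker_iff :
    (∃ z : ι → ℝ, z ≠ 0 ∧ (∀ i, Real.sign (z i) = Real.sign (ν i) ∨ Real.sign (z i) = 0) ∧
        A *ᵥ z = 0) ↔
      ∃ w : ι → ℝ, (∀ i ∈ ({i | ν i ≠ 0} : Finset ι), 0 ≤ w i) ∧
        (∃ i ∈ ({i | ν i ≠ 0} : Finset ι), w i ≠ 0) ∧
        ∑ i ∈ {i | ν i ≠ 0}, w i • Real.sign (ν i) • Aᵀ i = 0 := by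
  simp_rw [Real.sign_eq_or_sign_eq_zero_iff, ← mulVec_sign_mul_eq_sum]
  constructor
  · rintro ⟨z, hz, hsign, hker⟩
    obtain ⟨i, hi⟩ : ∃ i, z i ≠ 0 := Function.ne_iff.mp hz
    refine ⟨fun i ↦ |z i|, fun _ _ ↦ abs_nonneg _, ⟨i, ?_, abs_ne_zero.mpr hi⟩, ?_⟩
    · simp only [Finset.mem_filter_univ]
      rintro hν
      exact hi (by rw [hsign i, hν, Real.sign_zero, zero_mul])
    · rwa [← funext hsign]
  · rintro ⟨w, hw₀, ⟨i, hi, hwi⟩, hker⟩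
    refine ⟨_, Function.ne_iff.mpr ⟨i, mul_ne_zero ?_ hwi⟩, fun j ↦ ?_, hker⟩
    · simpa using hi
    · by_cases hν : ν j = 0
      · simp [hν]
      have hwj : 0 ≤ w j := hw₀ j (by simpa using hν)
      rcases Real.sign_apply_eq_of_ne_zero _ hν with h | h <;> simp [h, abs_of_nonneg hwj]

theorem exists_opposing_potential_iff [Fintype m] :
    (∃ γ : m → ℝ, ∀ i, Real.sign ((Aᵀ *ᵥ γ) i) = -Real.sign (ν i) ∨ ν i = 0) ↔
      ∃ y : m → ℝ, ∀ i ∈ ({i | ν i ≠ 0} : Finset ι), 0 < y ⬝ᵥ Real.sign (ν i) • Aᵀ i := by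
  have hdot (y : m → ℝ) (i : ι) :
      y ⬝ᵥ Real.sign (ν i) • Aᵀ i = Real.sign (ν i) * (Aᵀ *ᵥ y) i := by
    rw [dotProduct_smul, smul_eq_mul, dotProduct_comm]
    rfl
  simp only [Finset.mem_filter_univ, hdot]
  constructor
  · rintro ⟨γ, hγ⟩
    refine ⟨-γ, fun i hi ↦ ?_⟩
    rw [← Real.sign_neg_eq_neg_sign_iff hi, mulVec_neg, Pi.neg_apply, neg_neg]
    exact (hγ i).resolve_right hi
  · rintro ⟨y, hy⟩
    refine ⟨-y, fun i ↦ or_iff_not_imp_right.mpr fun hi ↦ ?_⟩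
    rw [mulVec_neg, Pi.neg_apply, Real.sign_neg_eq_neg_sign_iff hi]
    exact hy i hi

end Flux

/-- Gordan-type alternative for reversible reaction systems: either there is a
nonzero sign-compatible kernel vector, or a potential vector opposing the flux. -/
theorem gordan_flux_alternative (n r : ℕ) (A : Matrix (Fin n) (Fin r) ℝ)
    (ν : Fin r → ℝ) :
    Xor'
      (∃ z : Fin r → ℝ, z ≠ 0 ∧
        (∀ i, Real.sign (z i) = Real.sign (ν i) ∨ Real.sign (z i) = 0) ∧
        A.mulVec z = 0)
      (∃ γ : Fin n → ℝ, ∀ i,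
        Real.sign (Aᵀ.mulVec γ i) = -Real.sign (ν i) ∨ ν i = 0) := by
  rw [exists_signCompatible_mem_ker_iff, exists_opposing_potential_iff]
  exact Finset.gordan_alternative_dotProduct (m := Fin n) _ _
end

section
/- Let A ∈ R^{n×r}, B ∈ R^{r×n}, K ⊆ R^n. If σ(ker(A)) ∩ σ(B(Σ(K \ {0}))) = ∅ where Σ(K*) = σ^{-1}(σ(K \ {0})), then for all κ ∈ R^r_{>0}, the map f_κ(x) = A diag(κ) x^B on R^n_{>0} is injective with respect to K (f_κ(x) = f_κ(y) with x − y ∈ K implies x = y). -/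
/-!
Suppose `f_κ(x) = f_κ(y)` with `x ≠ y` and `x - y ∈ K`. With `u = log x - log y` and
`k = diag(κ) (x^B - y^B)` we get `A k = 0`, and since `log` and `exp` are strictly increasing,
`σ(u) = σ(x - y)` and `σ(k) = σ(B u)` (because `x^B = exp (B log x)`). This exhibits a common
element of `σ(ker A)` and `σ(B(Σ(K \ {0})))`.
-/

open Matrix

namespace Real

lemma sign_sub_of_strictMonoOn {f : ℝ → ℝ} {s : Set ℝ} (hf : StrictMonoOn f s) {a b : ℝ}
    (ha : a ∈ s) (hb : b ∈ s) : sign (f a - f b) = sign (a - b) := by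
  rcases lt_trichotomy a b with h | rfl | h
  · rw [sign_of_neg (sub_neg.2 (hf ha hb h)), sign_of_neg (sub_neg.2 h)]
  · simp
  · rw [sign_of_pos (sub_pos.2 (hf hb ha h)), sign_of_pos (sub_pos.2 h)]

lemma sign_mul_of_pos {c : ℝ} (hc : 0 < c) (t : ℝ) : sign (c * t) = sign t := by
  rcases lt_trichotomy t 0 with h | rfl | h
  · rw [sign_of_neg h, sign_of_neg (mul_neg_of_pos_of_neg hc h)]
  · simp
  · rw [sign_of_pos h, sign_of_pos (mul_pos hc h)]

end Real

lemma monomialMap_eq_exp_mulVec_log {r n : ℕ} (B : Matrix (Fin r) (Fin n) ℝ) {x : Fin n → ℝ}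
    (hx : ∀ i, 0 < x i) (j : Fin r) :
    monomialMap B x j = Real.exp ((B *ᵥ fun i => Real.log (x i)) j) := by
  rw [monomialMap, mulVec, dotProduct, Real.exp_sum]
  refine Finset.prod_congr rfl fun i _ => ?_
  rw [Real.rpow_def_of_pos (hx i), mul_comm]

lemma sign_monomialMap_sub {r n : ℕ} (B : Matrix (Fin r) (Fin n) ℝ) {x y : Fin n → ℝ}
    (hx : ∀ i, 0 < x i) (hy : ∀ i, 0 < y i) (j : Fin r) :
    Real.sign (monomialMap B x j - monomialMap B y j) =
      Real.sign ((B *ᵥ fun i => Real.log (x i) - Real.log (y i)) j) := by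
  have hlog : (fun i => Real.log (x i) - Real.log (y i)) =
      (fun i => Real.log (x i)) - fun i => Real.log (y i) := rfl
  rw [monomialMap_eq_exp_mulVec_log B hx, monomialMap_eq_exp_mulVec_log B hy, hlog,
    mulVec_sub, Pi.sub_apply,
    Real.sign_sub_of_strictMonoOn (Real.exp_strictMono.strictMonoOn Set.univ) trivial trivial]

/-- Müller–Feliu-type injectivity (one direction): the sign condition
`σ(ker A) ∩ σ(B(Σ(K \ {0}))) = ∅` implies injectivity of
`f_κ(x) = A diag(κ) x^B` with respect to `K`, for all positive `κ`. -/
theorem injective_of_sign_condition (n r : ℕ) (A : Matrix (Fin n) (Fin r) ℝ)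
    (B : Matrix (Fin r) (Fin n) ℝ) (K : Set (Fin n → ℝ))
    (hsig : ¬ ∃ k : Fin r → ℝ, ∃ u : Fin n → ℝ,
      A.mulVec k = 0 ∧
      (∃ w ∈ K, w ≠ 0 ∧ ∀ i, Real.sign (u i) = Real.sign (w i)) ∧
      (∀ j, Real.sign (k j) = Real.sign (B.mulVec u j))) :
    ∀ κ : Fin r → ℝ, (∀ j, 0 < κ j) →
      ∀ x y : Fin n → ℝ, (∀ i, 0 < x i) → (∀ i, 0 < y i) →
        A.mulVec (fun j => κ j * monomialMap B x j) =
          A.mulVec (fun j => κ j * monomialMap B y j) →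
        x - y ∈ K → x = y := by
  intro κ hκ x y hx hy hf hK
  by_contra hne
  set k : Fin r → ℝ := fun j => κ j * (monomialMap B x j - monomialMap B y j)
  have hk_ker : A *ᵥ k = 0 := by
    have hk : k = (fun j => κ j * monomialMap B x j) - fun j => κ j * monomialMap B y j := by
      funext j; simp only [k, Pi.sub_apply, mul_sub]
    rw [hk, mulVec_sub, hf, sub_self]
  refine hsig ⟨k, fun i => Real.log (x i) - Real.log (y i), hk_ker,
    ⟨x - y, hK, sub_ne_zero.2 hne, fun i => ?_⟩, fun j => ?_⟩
  · exact Real.sign_sub_of_strictMonoOn Real.strictMonoOn_log (hx i) (hy i)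
  · rw [Real.sign_mul_of_pos (hκ j), sign_monomialMap_sub B hx hy]
end
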